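/- Let M be the star with countably many branches, with metric d₁([x,m],[y,n]) = |x − y|/m if m = n and x/m + y/n otherwise, let 0 ∈ M be the class of (0,1), and define f : M → ℝ by f([x,n]) = x. Then f is not continuous at 0 with respect to d₁: the sequence ([1, p])_{p ≥ 1} converges to 0 in (M, d₁) (since d₁([1,p], 0) = 1/p → 0), while f([1, p]) = 1 for all p does not converge to f(0) = 0. Hence on the compact geodesic space (M, d₁) there exists a geodesically convex real-valued function that is not continuous. -/

import Mathlib

/-- Points of `[0,1] × ℕ≥1`: countably many copies of the unit interval. -/
abbrev StarPoint : Type := Set.Icc (0:ℝ) 1 × {n : ℕ // 1 ≤ n}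

/-- The gluing relation: `(x,m) ∼ (y,n) ↔ (x = y = 0) ∨ (x = y ∧ m = n)`. -/
def starSetoid : Setoid StarPoint where
  r a b := (a.1.1 = 0 ∧ b.1.1 = 0) ∨ (a.1.1 = b.1.1 ∧ a.2 = b.2)
  iseqv := by
    constructor
    · intro a; exact Or.inr ⟨rfl, rfl⟩
    · rintro a b (⟨h1, h2⟩ | ⟨h1, h2⟩)
      · exact Or.inl ⟨h2, h1⟩
      · exact Or.inr ⟨h1.symm, h2.symm⟩
    · rintro a b c (⟨h1, h2⟩ | ⟨h1, h2⟩) (⟨g1, g2⟩ | ⟨g1, g2⟩)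
      · exact Or.inl ⟨h1, g2⟩
      · exact Or.inl ⟨h1, g1 ▸ h2⟩
      · exact Or.inl ⟨h1.trans g1, g2⟩
      · exact Or.inr ⟨h1.trans g1, h2.trans g2⟩

/-- The star with countably many branches: the quotient of `[0,1] × ℕ≥1` gluing all the
origins together. -/
def StarSpace : Type := Quotient starSetoid

/-- The distance `d₁((x,m),(y,n)) = |x-y|/m` if `m = n`, and `x/m + y/n` otherwise. -/
noncomputable def d1 (a b : StarPoint) : ℝ :=
  if a.2 = b.2 then |a.1.1 - b.1.1| / (a.2.1 : ℝ)
  else a.1.1 / (a.2.1 : ℝ) + b.1.1 / (b.2.1 : ℝ)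

lemma d1_self (a : StarPoint) : d1 a a = 0 := by
  unfold d1; rw [if_pos rfl, sub_self, abs_zero, zero_div]

lemma d1_comm (a b : StarPoint) : d1 a b = d1 b a := by
  unfold d1
  rcases eq_or_ne a.2 b.2 with h | h
  · rw [if_pos h, if_pos h.symm, abs_sub_comm, h]
  · rw [if_neg h, if_neg (Ne.symm h), add_comm]

lemma d1_triangle (a b c : StarPoint) : d1 a c ≤ d1 a b + d1 b c := by
  obtain ⟨⟨x, hx0, hx1⟩, m⟩ := a
  obtain ⟨⟨y, hy0, hy1⟩, n⟩ := b
  obtain ⟨⟨z, hz0, hz1⟩, k⟩ := c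
  have hm : (0:ℝ) < (m.1 : ℝ) := by exact_mod_cast m.2
  have hn : (0:ℝ) < (n.1 : ℝ) := by exact_mod_cast n.2
  have hk : (0:ℝ) < (k.1 : ℝ) := by exact_mod_cast k.2
  unfold d1
  dsimp only
  rcases eq_or_ne m n with hmn | hmn <;> rcases eq_or_ne n k with hnk | hnk
  · subst hmn; subst hnk
    rw [if_pos rfl, if_pos rfl, if_pos rfl, ← add_div]
    gcongr
    exact abs_sub_le x y z
  · subst hmn
    rw [if_neg hnk, if_pos rfl, if_neg hnk]
    have h1 : x / (m.1:ℝ) ≤ (|x - y| + y) / (m.1:ℝ) := by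
      gcongr
      have := le_abs_self (x - y); linarith
    rw [add_div] at h1
    linarith
  · subst hnk
    rw [if_neg hmn, if_neg hmn, if_pos rfl]
    have h1 : z / (n.1:ℝ) ≤ (|y - z| + y) / (n.1:ℝ) := by
      gcongr
      have := le_abs_self (z - y); rw [abs_sub_comm] at this; linarith
    rw [add_div] at h1
    linarith
  · have hyn : 0 ≤ y / (n.1:ℝ) := div_nonneg hy0 hn.le
    rcases eq_or_ne m k with hmk | hmk
    · subst hmk
      rw [if_pos rfl, if_neg hmn, if_neg hnk]
      have h0 : |x - z| ≤ x + z := by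
        rw [abs_sub_le_iff]; constructor <;> linarith
      have h1 : |x - z| / (m.1:ℝ) ≤ (x + z) / (m.1:ℝ) := by gcongr
      rw [add_div] at h1
      linarith
    · rw [if_neg hmk, if_neg hmn, if_neg hnk]
      linarith

lemma d1_rel_of_eq_zero {a b : StarPoint} (h : d1 a b = 0) : starSetoid.r a b := by
  have hm : (0:ℝ) < (a.2.1 : ℝ) := by exact_mod_cast a.2.2
  have hn : (0:ℝ) < (b.2.1 : ℝ) := by exact_mod_cast b.2.2
  unfold d1 at h
  split_ifs at h with hab
  · refine Or.inr ⟨?_, hab⟩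
    have := div_eq_zero_iff.mp h
    rcases this with h' | h'
    · have : a.1.1 - b.1.1 = 0 := abs_eq_zero.mp h'
      linarith
    · exact absurd h' hm.ne'
  · have h1 : 0 ≤ a.1.1 / (a.2.1 : ℝ) := div_nonneg a.1.2.1 hm.le
    have h2 : 0 ≤ b.1.1 / (b.2.1 : ℝ) := div_nonneg b.1.2.1 hn.le
    have ha : a.1.1 / (a.2.1 : ℝ) = 0 := by linarith
    have hb : b.1.1 / (b.2.1 : ℝ) = 0 := by linarith
    refine Or.inl ⟨?_, ?_⟩
    · rcases div_eq_zero_iff.mp ha with h' | h'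
      · exact h'
      · exact absurd h' hm.ne'
    · rcases div_eq_zero_iff.mp hb with h' | h'
      · exact h'
      · exact absurd h' hn.ne'

lemma d1_of_fst_eq_zero {a : StarPoint} (b : StarPoint) (ha : a.1.1 = 0) :
    d1 a b = b.1.1 / (b.2.1 : ℝ) := by
  unfold d1
  split_ifs with h
  · rw [ha, h, zero_sub, abs_neg, abs_of_nonneg b.1.2.1]
  · rw [ha, zero_div, zero_add]

lemma d1_congr_left {a₁ a₂ : StarPoint} (b : StarPoint) (h : starSetoid.r a₁ a₂) :
    d1 a₁ b = d1 a₂ b := by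
  rcases h with ⟨h1, h2⟩ | ⟨h1, h2⟩
  · rw [d1_of_fst_eq_zero b h1, d1_of_fst_eq_zero b h2]
  · have : a₁ = a₂ := Prod.ext (Subtype.ext h1) h2
    rw [this]

/-- `d₁` descends to the quotient. -/
noncomputable def starDist1 : StarSpace → StarSpace → ℝ :=
  Quotient.lift₂ d1 (fun a₁ b₁ a₂ b₂ ha hb => by
    calc d1 a₁ b₁ = d1 a₂ b₁ := d1_congr_left b₁ ha
    _ = d1 b₁ a₂ := d1_comm _ _
    _ = d1 b₂ a₂ := d1_congr_left a₂ hb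
    _ = d1 a₂ b₂ := d1_comm _ _)

/-- The star with countably many branches, as a metric space for `d₁`. -/
noncomputable instance StarSpace.metricSpace : MetricSpace StarSpace where
  dist := starDist1
  dist_self := by
    rintro ⟨a⟩; exact d1_self a
  dist_comm := by
    rintro ⟨a⟩ ⟨b⟩; exact d1_comm a b
  dist_triangle := by
    rintro ⟨a⟩ ⟨b⟩ ⟨c⟩; exact d1_triangle a b c
  eq_of_dist_eq_zero := by
    rintro ⟨a⟩ ⟨b⟩ h
    exact Quotient.sound (d1_rel_of_eq_zero h)

/-- The class of a point of `[0,1] × ℕ≥1` in the star. -/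
def StarSpace.mk (a : StarPoint) : StarSpace := Quotient.mk starSetoid a

lemma StarSpace.dist_mk (a b : StarPoint) :
    dist (StarSpace.mk a) (StarSpace.mk b) = d1 a b := rfl

/-- The origin of the star: the common class of the points `(0, n)`. -/
def StarSpace.origin : StarSpace := StarSpace.mk (⟨0, by norm_num⟩, ⟨1, le_refl 1⟩)

/-- A geodesic from `p` to `q` in a metric space, parametrized by `[0,1]`
(proportionally to arclength). -/
def IsGeodesic {X : Type*} [MetricSpace X] (p q : X) (γ : Set.Icc (0:ℝ) 1 → X) : Prop :=
  γ ⟨0, by norm_num⟩ = p ∧ γ ⟨1, by norm_num⟩ = q ∧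
    ∀ s t : Set.Icc (0:ℝ) 1, dist (γ s) (γ t) = |(s:ℝ) - (t:ℝ)| * dist p q

/-- Geodesic convexity for a real-valued function on a metric space. -/
def GeodesicallyConvexReal {X : Type*} [MetricSpace X] (f : X → ℝ) : Prop :=
  ∀ (p q : X) (γ : Set.Icc (0:ℝ) 1 → X), IsGeodesic p q γ →
    ∀ t : Set.Icc (0:ℝ) 1, f (γ t) ≤ (1 - (t:ℝ)) * f p + (t:ℝ) * f q

/-- The height function `f [x, n] = x`, well-defined on the quotient. -/
def starF : StarSpace → ℝ :=
  Quotient.lift (fun a : StarPoint => a.1.1) (by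
    rintro a b (⟨h1, h2⟩ | ⟨h1, h2⟩) <;> try dsimp only
    · rw [h1, h2]
    · exact h1)

/-- The sequence `[1, p+1]`, `p = 0, 1, 2, …`: the tips of the branches. -/
def starTip (p : ℕ) : StarSpace :=
  StarSpace.mk (⟨1, by norm_num⟩, ⟨p + 1, by omega⟩)

/-! A point `[x, n]` is at distance `r = x / n` from the origin, and `d₁` is `|r - r'|` on a
common branch and `r + r'` across branches. Hence the tips `[1, p]` tend to the origin while
`f = 1` on them. A branch, and the union of two branches glued at the origin, are isometric to
real intervals, which gives geodesics; conversely a point between `p` and `q` lies on the branch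
of `p` or of `q` at the forced distance, or at the origin, and `f = n r` is linear on branch `n`,
which gives convexity. A ball around the origin contains all but finitely many branches, each of
them compact, so the star is compact. -/

open Set Filter Topology

theorem IsGeodesic.dist_apply_left {X : Type*} [MetricSpace X] {p q : X}
    {γ : Icc (0:ℝ) 1 → X} (hγ : IsGeodesic p q γ) (t : Icc (0:ℝ) 1) :
    dist p (γ t) = t * dist p q := by
  rw [← hγ.1, hγ.2.2, hγ.1]
  simp [abs_of_nonneg t.2.1]

theorem IsGeodesic.dist_apply_right {X : Type*} [MetricSpace X] {p q : X}
    {γ : Icc (0:ℝ) 1 → X} (hγ : IsGeodesic p q γ) (t : Icc (0:ℝ) 1) :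
    dist (γ t) q = (1 - t) * dist p q := by
  rw [← hγ.2.1, hγ.2.2, hγ.2.1, abs_sub_comm]
  simp [abs_of_nonneg (sub_nonneg.2 t.2.2)]

theorem exists_isGeodesic_of_dist_eq_abs_sub {X : Type*} [MetricSpace X] {φ : ℝ → X} {u v : ℝ}
    (hφ : ∀ s ∈ Icc u v, ∀ s' ∈ Icc u v, dist (φ s) (φ s') = |s - s'|)
    {α β : ℝ} (hα : α ∈ Icc u v) (hβ : β ∈ Icc u v) :
    ∃ γ : Icc (0:ℝ) 1 → X, IsGeodesic (φ α) (φ β) γ := by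
  have hmem (t : Icc (0:ℝ) 1) : AffineMap.lineMap α β (t : ℝ) ∈ Icc u v :=
    (convex_Icc u v).lineMap_mem hα hβ t.2
  refine ⟨fun t => φ (AffineMap.lineMap α β (t : ℝ)), by simp, by simp, fun s t => ?_⟩
  rw [hφ _ (hmem s) _ (hmem t), hφ α hα β hβ, AffineMap.lineMap_apply_ring',
    AffineMap.lineMap_apply_ring', abs_sub_comm α β, ← abs_mul]
  congr 1
  ring

theorem compactSpace_of_cocompact_le_nhds {X : Type*} [TopologicalSpace X] (x : X)
    (h : cocompact X ≤ 𝓝 x) : CompactSpace X := by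
  refine isCompact_univ_iff.1 (isCompact_iff_ultrafilter_le_nhds.2 fun f _ => ?_)
  by_cases hx : ↑f ≤ 𝓝 x
  · exact ⟨x, mem_univ x, hx⟩
  · obtain ⟨U, hU, hUf⟩ := Filter.not_le.1 hx
    obtain ⟨K, hK, hKU⟩ := mem_cocompact.1 (h hU)
    have hKf : K ∈ f := f.mem_of_superset (f.compl_mem_iff_notMem.2 hUf) (compl_subset_comm.1 hKU)
    obtain ⟨y, -, hy⟩ := hK.ultrafilter_le_nhds f (le_principal_iff.2 hKf)
    exact ⟨y, mem_univ y, hy⟩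

namespace StarPoint

noncomputable def radius (a : StarPoint) : ℝ := a.1.1 / a.2.1

/-- The point at distance `r` from the origin on branch `n`; the clamping makes it meaningful
only for `0 ≤ r ≤ 1/n`. -/
noncomputable def ofRadius (n : {n : ℕ // 1 ≤ n}) (r : ℝ) : StarPoint :=
  (projIcc 0 1 zero_le_one (n * r), n)

theorem coe_snd_pos (a : StarPoint) : (0:ℝ) < a.2.1 := by exact_mod_cast a.2.2

theorem fst_eq_mul_radius (a : StarPoint) : a.1.1 = a.2.1 * a.radius :=
  (mul_div_cancel₀ _ a.coe_snd_pos.ne').symm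

theorem radius_mem (a : StarPoint) : a.radius ∈ Icc 0 (a.2.1 : ℝ)⁻¹ :=
  ⟨div_nonneg a.1.2.1 a.coe_snd_pos.le,
    by rw [radius, div_eq_mul_inv]; exact mul_le_of_le_one_left (by positivity) a.1.2.2⟩

theorem d1_eq (a b : StarPoint) :
    d1 a b = if a.2 = b.2 then |a.radius - b.radius| else a.radius + b.radius := by
  unfold d1 radius
  split_ifs with h
  · rw [h, ← sub_div, abs_div, abs_of_pos b.coe_snd_pos]
  · rfl

theorem radius_ofRadius {n : {n : ℕ // 1 ≤ n}} {r : ℝ} (hr : r ∈ Icc 0 (n.1 : ℝ)⁻¹) :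
    (ofRadius n r).radius = r := by
  have hn : (0:ℝ) < n.1 := by exact_mod_cast n.2
  have hnr : (n:ℝ) * r ∈ Icc (0:ℝ) 1 :=
    ⟨by nlinarith [hr.1], by simpa [hn.ne'] using mul_le_mul_of_nonneg_left hr.2 hn.le⟩
  simp only [radius, ofRadius, projIcc_of_mem _ hnr, mul_div_cancel_left₀ _ hn.ne']

theorem ofRadius_radius (a : StarPoint) : ofRadius a.2 a.radius = a := by
  ext
  · simp only [ofRadius, ← fst_eq_mul_radius, projIcc_val]
  · rfl

theorem d1_le_radius_add_radius (a b : StarPoint) : d1 a b ≤ a.radius + b.radius := by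
  rw [d1_eq]
  split_ifs
  · exact (abs_sub _ _).trans (by rw [abs_of_nonneg a.radius_mem.1, abs_of_nonneg b.radius_mem.1])
  · rfl

/-- Betweenness forces `c` onto the branch of `a` or of `b`, or to the origin. -/
theorem fst_le_of_d1_eq {a b c : StarPoint} {t : ℝ} (ht0 : 0 ≤ t) (ht1 : t ≤ 1)
    (hac : d1 a c = t * d1 a b) (hcb : d1 c b = (1 - t) * d1 a b) :
    c.1.1 ≤ (1 - t) * a.1.1 + t * b.1.1 := by
  have hx : 0 ≤ (1 - t) * a.1.1 := mul_nonneg (by linarith) a.1.2.1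
  have hy : 0 ≤ t * b.1.1 := mul_nonneg ht0 b.1.2.1
  have hab := d1_le_radius_add_radius a b
  rw [d1_eq] at hac hcb
  rw [fst_eq_mul_radius a, fst_eq_mul_radius b, fst_eq_mul_radius c] at *
  by_cases hca : a.2 = c.2 <;> by_cases hcb' : c.2 = b.2
  · rw [if_pos hca] at hac
    rw [if_pos hcb'] at hcb
    rw [d1_eq, if_pos (hca.trans hcb')] at hac hcb
    have hr : c.radius ≤ (1 - t) * a.radius + t * b.radius := by
      rcases abs_cases (a.radius - b.radius) with ⟨h, -⟩ | ⟨h, -⟩ <;> rw [h] at hac hcb <;>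
        linarith [le_abs_self (c.radius - a.radius), abs_sub_comm a.radius c.radius,
          le_abs_self (c.radius - b.radius)]
    rw [← hca, ← hcb', ← hca]
    nlinarith [a.coe_snd_pos]
  · rw [if_pos hca] at hac
    rw [if_neg hcb'] at hcb
    rw [d1_eq, if_neg (hca ▸ hcb')] at hcb
    have hr : c.radius ≤ (1 - t) * a.radius := by nlinarith [b.radius_mem.1]
    rw [← hca]
    nlinarith [a.coe_snd_pos]
  · rw [if_neg hca] at hac
    rw [if_pos hcb'] at hcb
    rw [d1_eq, if_neg (hcb' ▸ hca)] at hac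
    have hr : c.radius ≤ t * b.radius := by nlinarith [a.radius_mem.1]
    rw [hcb']
    nlinarith [b.coe_snd_pos]
  · rw [if_neg hca] at hac
    rw [if_neg hcb'] at hcb
    have hr : c.radius ≤ 0 := by linarith
    nlinarith [c.coe_snd_pos]

end StarPoint

namespace StarSpace

open StarPoint

theorem mk_surjective : Function.Surjective StarSpace.mk := Quotient.mk_surjective

theorem dist_mk_origin (a : StarPoint) : dist (mk a) origin = a.radius := by
  rw [origin, dist_mk, d1_comm]
  exact d1_of_fst_eq_zero a rfl

theorem mk_ofRadius_zero (m n : {n : ℕ // 1 ≤ n}) : mk (ofRadius m 0) = mk (ofRadius n 0) :=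
  Quotient.sound (Or.inl ⟨by simp [ofRadius], by simp [ofRadius]⟩)

theorem dist_mk_ofRadius {m n : {n : ℕ // 1 ≤ n}} {r r' : ℝ} (hr : r ∈ Icc 0 (m.1 : ℝ)⁻¹)
    (hr' : r' ∈ Icc 0 (n.1 : ℝ)⁻¹) :
    dist (mk (ofRadius m r)) (mk (ofRadius n r')) = if m = n then |r - r'| else r + r' := by
  rw [dist_mk, d1_eq, radius_ofRadius hr, radius_ofRadius hr']
  rfl

/-- The union of the branches `m` and `n`, parametrized as a line: `σ ≤ 0` runs over branch `m`
and `σ ≥ 0` over branch `n`. -/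
noncomputable def line (m n : {n : ℕ // 1 ≤ n}) (σ : ℝ) : StarSpace :=
  if σ ≤ 0 then mk (ofRadius m (-σ)) else mk (ofRadius n σ)

theorem line_neg (m n : {n : ℕ // 1 ≤ n}) {r : ℝ} (hr : 0 ≤ r) :
    line m n (-r) = mk (ofRadius m r) := by
  rw [line, if_pos (neg_nonpos.2 hr), neg_neg]

theorem line_of_nonneg (m n : {n : ℕ // 1 ≤ n}) {r : ℝ} (hr : 0 ≤ r) :
    line m n r = mk (ofRadius n r) := by
  rcases hr.eq_or_lt with rfl | hr
  · rw [line, if_pos le_rfl, neg_zero, mk_ofRadius_zero]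
  · rw [line, if_neg hr.not_ge]

theorem dist_line {m n : {n : ℕ // 1 ≤ n}} (hmn : m ≠ n) {σ σ' : ℝ}
    (hσ : σ ∈ Icc (-(m.1 : ℝ)⁻¹) (n.1 : ℝ)⁻¹) (hσ' : σ' ∈ Icc (-(m.1 : ℝ)⁻¹) (n.1 : ℝ)⁻¹) :
    dist (line m n σ) (line m n σ') = |σ - σ'| := by
  obtain ⟨hσm, hσn⟩ := hσ
  obtain ⟨hσm', hσn'⟩ := hσ'
  unfold line
  split_ifs with h h' h'
  · rw [dist_mk_ofRadius ⟨by linarith, by linarith⟩ ⟨by linarith, by linarith⟩, if_pos rfl,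
      neg_sub_neg, abs_sub_comm]
  · rw [dist_mk_ofRadius ⟨by linarith, by linarith⟩ ⟨by linarith, hσn'⟩, if_neg hmn,
      abs_of_nonpos (by linarith)]
    ring
  · rw [dist_mk_ofRadius ⟨by linarith, hσn⟩ ⟨by linarith, by linarith⟩, if_neg hmn.symm,
      abs_of_nonneg (by linarith)]
    ring
  · rw [dist_mk_ofRadius ⟨by linarith, hσn⟩ ⟨by linarith, hσn'⟩, if_pos rfl]

theorem exists_isGeodesic (p q : StarSpace) : ∃ γ, IsGeodesic p q γ := by
  obtain ⟨a, rfl⟩ := mk_surjective p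
  obtain ⟨b, rfl⟩ := mk_surjective q
  rw [← ofRadius_radius a, ← ofRadius_radius b]
  rcases eq_or_ne a.2 b.2 with hab | hab
  · rw [← hab]
    exact exists_isGeodesic_of_dist_eq_abs_sub
      (fun s hs s' hs' => by rw [dist_mk_ofRadius hs hs', if_pos rfl]) a.radius_mem
      (hab ▸ b.radius_mem)
  · rw [← line_neg a.2 b.2 a.radius_mem.1, ← line_of_nonneg a.2 b.2 b.radius_mem.1]
    refine exists_isGeodesic_of_dist_eq_abs_sub (fun s hs s' hs' => dist_line hab hs hs') ?_ ?_
    · exact ⟨neg_le_neg a.radius_mem.2,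
        by linarith [a.radius_mem.1, inv_pos.2 b.coe_snd_pos]⟩
    · exact ⟨by linarith [b.radius_mem.1, inv_pos.2 a.coe_snd_pos], b.radius_mem.2⟩

theorem lipschitzWith_mk : LipschitzWith 2 StarSpace.mk := by
  refine LipschitzWith.of_dist_le_mul fun a b => ?_
  rw [dist_mk, Prod.dist_eq, NNReal.coe_ofNat]
  unfold d1
  split_ifs with h
  · calc |a.1.1 - b.1.1| / (a.2.1 : ℝ) ≤ dist a.1 b.1 :=
          div_le_self (abs_nonneg _) (by exact_mod_cast a.2.2)
      _ ≤ 2 * max (dist a.1 b.1) (dist a.2 b.2) := by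
          linarith [le_max_left (dist a.1 b.1) (dist a.2 b.2), dist_nonneg (x := a.1) (y := b.1)]
  · have h1 : 1 ≤ dist a.2 b.2 := Nat.pairwise_one_le_dist (Subtype.val_injective.ne h)
    have hle (c : StarPoint) : c.1.1 / (c.2.1 : ℝ) ≤ 1 :=
      (div_le_self c.1.2.1 (by exact_mod_cast c.2.2)).trans c.1.2.2
    linarith [hle a, hle b, le_max_right (dist a.1 b.1) (dist a.2 b.2)]

instance : CompactSpace StarSpace := by
  refine compactSpace_of_cocompact_le_nhds origin fun U hU => ?_
  obtain ⟨ε, hε, hεU⟩ := Metric.mem_nhds_iff.1 hU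
  obtain ⟨N, hN⟩ := exists_nat_gt ε⁻¹
  have hfin : {n : {n : ℕ // 1 ≤ n} | n.1 ≤ N}.Finite :=
    (finite_le_nat N).preimage Subtype.val_injective.injOn
  refine mem_cocompact.2 ⟨mk '' (univ ×ˢ {n | n.1 ≤ N}),
    (isCompact_univ.prod hfin.isCompact).image lipschitzWith_mk.continuous, fun z hz => hεU ?_⟩
  obtain ⟨a, rfl⟩ := mk_surjective z
  have haN : N < a.2.1 := not_le.1 fun h => hz (mem_image_of_mem mk ⟨mem_univ _, h⟩)
  rw [Metric.mem_ball, dist_mk_origin]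
  exact a.radius_mem.2.trans_lt (inv_lt_of_inv_lt₀ hε (hN.trans (by exact_mod_cast haN)))

end StarSpace

theorem dist_starTip_origin (p : ℕ) : dist (starTip p) StarSpace.origin = 1 / ((p : ℝ) + 1) := by
  rw [starTip, StarSpace.dist_mk_origin, StarPoint.radius]
  push_cast
  rfl

theorem tendsto_starTip : Tendsto starTip atTop (𝓝 StarSpace.origin) :=
  tendsto_iff_dist_tendsto_zero.2 <| by
    simpa only [dist_starTip_origin] using tendsto_one_div_add_atTop_nhds_zero_nat

theorem not_continuousAt_starF : ¬ ContinuousAt starF StarSpace.origin := fun h =>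
  one_ne_zero <| tendsto_nhds_unique (tendsto_const_nhds (x := (1:ℝ)))
    (h.tendsto.comp tendsto_starTip)

theorem starF_geodesicallyConvex : GeodesicallyConvexReal starF := by
  intro p q γ hγ t
  have hpz := hγ.dist_apply_left t
  have hzq := hγ.dist_apply_right t
  obtain ⟨a, rfl⟩ := StarSpace.mk_surjective p
  obtain ⟨b, rfl⟩ := StarSpace.mk_surjective q
  obtain ⟨c, hc⟩ := StarSpace.mk_surjective (γ t)
  rw [← hc] at hpz hzq ⊢
  exact StarPoint.fst_le_of_d1_eq t.2.1 t.2.2 hpz hzq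

/-- On the star with countably many branches with the metric `d₁`, the
function `f [x,n] = x` is not continuous at the origin: the tips `[1, p]` converge to the
origin (at distance `1/p`) while `f` equals `1` on them and `0` at the origin. Hence on
the compact geodesic space `(M, d₁)` there is a geodesically convex real-valued function
that is not continuous. -/
theorem starF_not_continuous_d1 :
    (∀ p : ℕ, dist (starTip p) StarSpace.origin = 1 / ((p : ℝ) + 1)) ∧
    Filter.Tendsto starTip Filter.atTop (nhds StarSpace.origin) ∧
    (∀ p : ℕ, starF (starTip p) = 1) ∧
    starF StarSpace.origin = 0 ∧
    ¬ ContinuousAt starF StarSpace.origin ∧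
    (CompactSpace StarSpace ∧
      (∀ p q : StarSpace, ∃ γ : Set.Icc (0:ℝ) 1 → StarSpace, IsGeodesic p q γ) ∧
      ∃ h : StarSpace → ℝ, GeodesicallyConvexReal h ∧ ¬ Continuous h) :=
  ⟨dist_starTip_origin, tendsto_starTip, fun _ => rfl, rfl, not_continuousAt_starF,
    inferInstance, StarSpace.exists_isGeodesic, starF, starF_geodesicallyConvex,
    fun h => not_continuousAt_starF h.continuousAt⟩
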